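/- Let Rad be a root system in a finite-dimensional real inner product space V, let t be an involution of Rad, let v be an S-chamber vector for t, and let R_•^t = {α ∈ Rad : t(α) = −α}. Then every root β ∈ R_•^t is an integral linear combination of the elements of B(v) ∩ R_•^t, with coefficients either all ≥ 0 or all ≤ 0; in other words, B(v) ∩ R_•^t is a base of simple roots for the root subsystem R_•^t. -/
import Mathlib


open scoped RealInnerProductSpace

namespace PaperRS

variable {V : Type*} [NormedAddCommGroup V] [InnerProductSpace ℝ V]

/-- The reflection in a root `α`. -/
noncomputable def reflRoot (α x : V) : V := x - (2 * ⟪x, α⟫ / ⟪α, α⟫) • α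

/-- `Rad` is a (reduced, crystallographic) root system in `V`. -/
structure IsRootSystem (Rad : Set V) : Prop where
  finite : Rad.Finite
  nonzero : ∀ α ∈ Rad, α ≠ 0
  spanning : Submodule.span ℝ Rad = ⊤
  integral : ∀ α ∈ Rad, ∀ β ∈ Rad, ∃ n : ℤ, 2 * ⟪β, α⟫ / ⟪α, α⟫ = (n : ℝ)
  reflMem : ∀ α ∈ Rad, ∀ β ∈ Rad, reflRoot α β ∈ Rad
  reduced : ∀ α ∈ Rad, ∀ c : ℝ, c • α ∈ Rad → c = 1 ∨ c = -1

/-- Irreducibility: `Rad` is not the union of two nonempty mutually orthogonal subsets. -/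
def IsIrreducible (Rad : Set V) : Prop :=
  ¬ ∃ R₁ R₂ : Set V, R₁.Nonempty ∧ R₂.Nonempty ∧ Rad = R₁ ∪ R₂ ∧
      ∀ α ∈ R₁, ∀ β ∈ R₂, ⟪α, β⟫ = 0

/-- An involution of the root system `Rad`: an orthogonal linear automorphism `t` of `V`
with `t(Rad) = Rad` and `t ∘ t = id`. -/
structure IsInvolution (Rad : Set V) (t : V ≃ₗᵢ[ℝ] V) : Prop where
  maps : (⇑t) '' Rad = Rad
  invol : ∀ x : V, t (t x) = x

/-- Two roots are strongly orthogonal if neither their sum nor their difference is a root. -/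
def StronglyOrthogonal (Rad : Set V) (α β : V) : Prop :=
  α ≠ β ∧ α ≠ -β ∧ α + β ∉ Rad ∧ α - β ∉ Rad

/-- A vector is regular for `Rad` if it is orthogonal to no root. -/
def IsRegular (Rad : Set V) (v : V) : Prop := ∀ α ∈ Rad, ⟪α, v⟫ ≠ 0

/-- The positive roots determined by a regular vector `v`. -/
def posRoots (Rad : Set V) (v : V) : Set V := {α ∈ Rad | 0 < ⟪α, v⟫}

/-- The base of simple roots determined by a regular vector `v`: the positive roots which
are not sums of two positive roots. -/
def simpleBase (Rad : Set V) (v : V) : Set V :=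
  {α ∈ posRoots Rad v | ¬ ∃ β ∈ posRoots Rad v, ∃ γ ∈ posRoots Rad v, α = β + γ}

/-- A regular vector `v` is an S-chamber vector for an involution `t` if
`(α,v)·(t α,v) > 0` for every complex root `α` (i.e. every root with `t α ≠ ±α`). -/
def IsSChamber (Rad : Set V) (t : V ≃ₗᵢ[ℝ] V) (v : V) : Prop :=
  IsRegular Rad v ∧
    ∀ α ∈ Rad, t α ≠ α → t α ≠ -α → 0 < ⟪α, v⟫ * ⟪t α, v⟫

/-- `P ⊆ Rad` is parabolic if `P ∪ (-P) = Rad` and `P` is closed under root addition. -/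
def IsParabolic (Rad P : Set V) : Prop :=
  P ⊆ Rad ∧ (∀ α ∈ Rad, α ∈ P ∨ -α ∈ P) ∧
    ∀ α ∈ P, ∀ β ∈ P, α + β ∈ Rad → α + β ∈ P

/-- Composition `s_{β 0} ∘ s_{β 1} ∘ ⋯ ∘ s_{β (r-1)}` of the reflections in the roots
`β 0, …, β (r-1)`. -/
noncomputable def reflComp : (r : ℕ) → (Fin r → V) → V → V
  | 0, _ => id
  | r + 1, β => reflRoot (β 0) ∘ reflComp r (fun i => β i.succ)

lemma neg_mem {Rad : Set V} (hRS : IsRootSystem Rad) {α : V} (hα : α ∈ Rad) : -α ∈ Rad := by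
  classical
  have h0 : ⟪α, α⟫ ≠ 0 := by
    simpa using (inner_self_ne_zero (𝕜 := ℝ)).mpr (hRS.nonzero α hα)
  have h := hRS.reflMem α hα α hα
  have hr : reflRoot α α = -α := by
    unfold reflRoot
    rw [show 2 * ⟪α, α⟫ / ⟪α, α⟫ = 2 by field_simp]
    module
  rwa [hr] at h

lemma pos_sum {Rad : Set V} (hRS : IsRootSystem Rad) (v : V) :
    ∀ β ∈ posRoots Rad v, ∃ c : V →₀ ℤ,
      (c.support : Set V) ⊆ simpleBase Rad v ∧
      β = (c.sum fun b n => n • b) ∧ (∀ b, 0 ≤ c b) := by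
  classical
  have hPfin : (posRoots Rad v).Finite := hRS.finite.subset fun α hα => hα.1
  set S := hPfin.toFinset with hS
  have key : ∀ n : ℕ, ∀ β ∈ posRoots Rad v,
      (S.filter fun x => ⟪x, v⟫ < ⟪β, v⟫).card = n → ∃ c : V →₀ ℤ,
      (c.support : Set V) ⊆ simpleBase Rad v ∧
      β = (c.sum fun b n => n • b) ∧ (∀ b, 0 ≤ c b) := by
    intro n
    induction n using Nat.strong_induction_on with
    | _ n ih =>
      intro β hβ hcard
      by_cases hsimp : β ∈ simpleBase Rad v
      · refine ⟨Finsupp.single β 1, ?_, ?_, ?_⟩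
        · intro b hb
          have : b = β := by
            have := Finsupp.support_single_subset (a := β) (b := (1 : ℤ)) hb
            simpa using this
          simpa [this] using hsimp
        · rw [Finsupp.sum_single_index] <;> simp
        · intro b
          rw [Finsupp.single_apply]
          split <;> norm_num
      · obtain ⟨γ, hγ, δ, hδ, hsum⟩ : ∃ γ ∈ posRoots Rad v, ∃ δ ∈ posRoots Rad v, β = γ + δ := by
          by_contra h; exact hsimp ⟨hβ, h⟩
        have hβv : ⟪β, v⟫ = ⟪γ, v⟫ + ⟪δ, v⟫ := by rw [hsum, inner_add_left]
        have hγlt : ⟪γ, v⟫ < ⟪β, v⟫ := by rw [hβv]; linarith [hδ.2]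
        have hδlt : ⟪δ, v⟫ < ⟪β, v⟫ := by rw [hβv]; linarith [hγ.2]
        have hmono : ∀ x : V, x ∈ posRoots Rad v → ⟪x, v⟫ < ⟪β, v⟫ →
            (S.filter fun y => ⟪y, v⟫ < ⟪x, v⟫).card <
            (S.filter fun y => ⟪y, v⟫ < ⟪β, v⟫).card := by
          intro x hx hxlt
          apply Finset.card_lt_card
          constructor
          · intro y hy
            simp only [Finset.mem_filter] at hy ⊢
            exact ⟨hy.1, lt_trans hy.2 hxlt⟩
          · intro hsub
            have hxmem : x ∈ S.filter fun y => ⟪y, v⟫ < ⟪β, v⟫ := by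
              simp only [Finset.mem_filter]
              exact ⟨hPfin.mem_toFinset.mpr hx, hxlt⟩
            have := hsub hxmem
            simp only [Finset.mem_filter] at this
            exact lt_irrefl _ this.2
        obtain ⟨c₁, hc₁s, hc₁r, hc₁n⟩ :=
          ih _ (hcard ▸ hmono γ hγ hγlt) γ hγ rfl
        obtain ⟨c₂, hc₂s, hc₂r, hc₂n⟩ :=
          ih _ (hcard ▸ hmono δ hδ hδlt) δ hδ rfl
        refine ⟨c₁ + c₂, ?_, ?_, fun b => add_nonneg (hc₁n b) (hc₂n b)⟩
        · intro b hb
          have := Finsupp.support_add (g₁ := c₁) (g₂ := c₂) (by simpa using hb)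
          rcases Finset.mem_union.mp this with h | h
          · exact hc₁s h
          · exact hc₂s h
        · rw [Finsupp.sum_add_index' (fun b => zero_smul ℤ b) (fun b m n => add_smul m n b),
            ← hc₁r, ← hc₂r, hsum]
  intro β hβ
  exact key _ β hβ rfl

lemma stmt11pos {Rad : Set V} (hRS : IsRootSystem Rad)
    (t : V ≃ₗᵢ[ℝ] V) (ht : IsInvolution Rad t) (v : V) (hv : IsSChamber Rad t v)
    (β : V) (hβ : β ∈ Rad) (hβim : t β = -β) (hβpos : 0 < ⟪β, v⟫) :
    ∃ c : V →₀ ℤ,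
      (c.support : Set V) ⊆ {γ | γ ∈ simpleBase Rad v ∧ t γ = -γ} ∧
      β = (c.sum fun b n => n • b) ∧ (∀ b, 0 ≤ c b) := by
  classical
  obtain ⟨c, hsupp, hrep, hpos⟩ := pos_sum hRS v β ⟨hβ, hβpos⟩
  have hβsum : β = ∑ b ∈ c.support, (c b : ℝ) • b := by
    rw [hrep, Finsupp.sum]
    exact Finset.sum_congr rfl fun b _ => (Int.cast_smul_eq_zsmul ℝ (c b) b).symm
  have hcomb : ∑ b ∈ c.support, (c b : ℝ) • (t b + b) = 0 := by
    have h1 : t β = ∑ b ∈ c.support, (c b : ℝ) • t b := by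
      rw [hβsum, map_sum]; simp
    calc ∑ b ∈ c.support, (c b : ℝ) • (t b + b)
        = (∑ b ∈ c.support, (c b : ℝ) • t b) + ∑ b ∈ c.support, (c b : ℝ) • b := by
          rw [← Finset.sum_add_distrib]
          exact Finset.sum_congr rfl fun b _ => smul_add _ _ _
      _ = t β + β := by rw [← h1, ← hβsum]
      _ = 0 := by rw [hβim]; exact neg_add_cancel β
  have hzero : ∑ b ∈ c.support, (c b : ℝ) * ⟪t b + b, v⟫ = 0 := by
    have h := congrArg (fun x : V => (⟪x, v⟫ : ℝ)) hcomb
    simp only [sum_inner, inner_zero_left] at h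
    rw [← h]
    exact Finset.sum_congr rfl fun b _ => (real_inner_smul_left _ _ _).symm
  have hkey : ∀ b ∈ c.support, t b ≠ -b → 0 < ⟪t b + b, v⟫ := by
    intro b hb hne
    have hbP : b ∈ simpleBase Rad v := hsupp (Finset.mem_coe.mpr hb)
    have hbv : 0 < ⟪b, v⟫ := hbP.1.2
    rw [inner_add_left]
    by_cases heq : t b = b
    · rw [heq]; linarith
    · have h := hv.2 b hbP.1.1 heq hne
      nlinarith
  have hterm_nonneg : ∀ b ∈ c.support, 0 ≤ (c b : ℝ) * ⟪t b + b, v⟫ := by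
    intro b hb
    by_cases him : t b = -b
    · have : t b + b = 0 := by rw [him]; exact neg_add_cancel b
      rw [this]; simp
    · exact mul_nonneg (by exact_mod_cast hpos b) (le_of_lt (hkey b hb him))
  have hterm_zero := (Finset.sum_eq_zero_iff_of_nonneg hterm_nonneg).mp hzero
  have himag : ∀ b ∈ c.support, t b = -b := by
    intro b hb
    by_contra him
    have h1 := hterm_zero b hb
    have h2 := hkey b hb him
    have h3 : (0 : ℝ) < (c b : ℝ) := by
      have : c b ≠ 0 := Finsupp.mem_support_iff.mp hb
      exact_mod_cast lt_of_le_of_ne (hpos b) (Ne.symm this)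
    nlinarith
  refine ⟨c, ?_, hrep, hpos⟩
  intro b hb
  exact ⟨hsupp hb, himag b (Finset.mem_coe.mp hb)⟩

/-- for an S-chamber vector `v` for `t`, the imaginary simple roots form a
base of simple roots for the subsystem of imaginary roots: every imaginary root is an
integral combination of imaginary simple roots with coefficients all ≥ 0 or all ≤ 0. -/
theorem stmt11 {V : Type*} [NormedAddCommGroup V] [InnerProductSpace ℝ V]
    [FiniteDimensional ℝ V] (Rad : Set V) (hRS : IsRootSystem Rad)
    (t : V ≃ₗᵢ[ℝ] V) (ht : IsInvolution Rad t) (v : V) (hv : IsSChamber Rad t v)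
    (β : V) (hβ : β ∈ Rad) (hβim : t β = -β) :
    ∃ c : V →₀ ℤ,
      (c.support : Set V) ⊆ {γ | γ ∈ simpleBase Rad v ∧ t γ = -γ} ∧
      β = (c.sum fun b n => n • b) ∧
      ((∀ b, 0 ≤ c b) ∨ (∀ b, c b ≤ 0)) := by
  classical
  rcases lt_trichotomy (⟪β, v⟫ : ℝ) 0 with hneg | hz | hpos
  · have hnβ : -β ∈ Rad := neg_mem hRS hβ
    have htnβ : t (-β) = -(-β) := by rw [map_neg, hβim]
    have hpos' : 0 < ⟪-β, v⟫ := by rw [inner_neg_left]; linarith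
    obtain ⟨c, h1, h2, h3⟩ := stmt11pos hRS t ht v hv (-β) hnβ htnβ hpos'
    refine ⟨-c, ?_, ?_, Or.inr fun b => by simpa using h3 b⟩
    · intro b hb
      apply h1
      simpa [Finsupp.support_neg] using hb
    · have hsum : ((-c).sum fun b n => n • b) = -(c.sum fun b n => n • b) := by
        rw [Finsupp.sum, Finsupp.sum, Finsupp.support_neg, ← Finset.sum_neg_distrib]
        exact Finset.sum_congr rfl fun b _ => by simp [neg_zsmul]
      rw [hsum, ← h2, neg_neg]
  · exact absurd hz (hv.1 β hβ)
  · obtain ⟨c, h1, h2, h3⟩ := stmt11pos hRS t ht v hv β hβ hβim hpos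
    exact ⟨c, h1, h2, Or.inl h3⟩


end PaperRS
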